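/- For a finite sequence of reals x_1,...,x_n, define recursively m_1 = x_1, d_1 = 1, and for i ≥ 2: m_i = max(m_{i-1}, x_i), d_i = d_{i-1}·exp(m_{i-1} - m_i) + exp(x_i - m_i). Then for all i, d_i = Σ_{j=1}^{i} exp(x_j - m_i), and consequently log(d_n) + m_n = log(Σ_{j=1}^{n} exp(x_j)). -/

import Mathlib

open Real Finset

/-! Rescaling by `exp (m (i-1) - m i)` moves every summand `exp (x j - m (i-1))` to offset
`m i`, so the recursion preserves `d i = ∑_{j ≤ i} exp (x j - m i)`. Log-sum-exp is invariant
under shifting all exponents by a constant, which gives the final identity. -/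

theorem Real.sum_exp_sub_mul_exp_sub {ι : Type*} (s : Finset ι) (x : ι → ℝ) (a b : ℝ) :
    (∑ j ∈ s, exp (x j - a)) * exp (a - b) = ∑ j ∈ s, exp (x j - b) := by
  rw [sum_mul]
  exact sum_congr rfl fun j _ => by rw [← exp_add]; ring_nf

theorem Real.log_sum_exp_sub_add {ι : Type*} {s : Finset ι} (hs : s.Nonempty) (x : ι → ℝ)
    (c : ℝ) : log (∑ j ∈ s, exp (x j - c)) + c = log (∑ j ∈ s, exp (x j)) := by
  have hpos : 0 < ∑ j ∈ s, exp (x j) := sum_pos (fun j _ => exp_pos _) hs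
  simp_rw [exp_sub, ← sum_div]
  rw [log_div hpos.ne' (exp_ne_zero c), log_exp]
  ring

theorem online_softmax_denominator_eq (x m d : ℕ → ℝ) (hm1 : m 1 = x 1) (hd1 : d 1 = 1)
    (hd : ∀ i, 2 ≤ i →
      d i = d (i - 1) * exp (m (i - 1) - m i) + exp (x i - m i)) :
    ∀ i, 1 ≤ i → d i = ∑ j ∈ Icc 1 i, exp (x j - m i) := by
  intro i hi
  induction i, hi using Nat.le_induction with
  | base => simp [hd1, hm1]
  | succ k hk ih =>
    rw [hd (k + 1) (by omega), Nat.add_sub_cancel, ih, sum_exp_sub_mul_exp_sub,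
      sum_Icc_succ_top (by omega)]

theorem online_softmax_correct_general
    (n : ℕ) (hn : 1 ≤ n) (x m d : ℕ → ℝ)
    (hm1 : m 1 = x 1) (hd1 : d 1 = 1)
    (hd : ∀ i, 2 ≤ i →
      d i = d (i - 1) * Real.exp (m (i - 1) - m i) + Real.exp (x i - m i)) :
    (∀ i, 1 ≤ i → i ≤ n →
        d i = ∑ j ∈ Finset.Icc 1 i, Real.exp (x j - m i)) ∧
      Real.log (d n) + m n = Real.log (∑ j ∈ Finset.Icc 1 n, Real.exp (x j)) := by
  have hinv := online_softmax_denominator_eq x m d hm1 hd1 hd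
  refine ⟨fun i hi _ => hinv i hi, ?_⟩
  rw [hinv n hn]
  exact log_sum_exp_sub_add (nonempty_Icc.mpr hn) x (m n)

/-- Correctness of the online softmax recursion: the running denominator
`d i` equals `∑_{j=1}^{i} exp(x j - m i)`, and consequently
`log (d n) + m n = log (∑_{j=1}^{n} exp (x j))`. -/
theorem online_softmax_correct
    (n : ℕ) (hn : 1 ≤ n) (x m d : ℕ → ℝ)
    (hm1 : m 1 = x 1) (hd1 : d 1 = 1)
    (hm : ∀ i, 2 ≤ i → m i = max (m (i - 1)) (x i))
    (hd : ∀ i, 2 ≤ i →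
      d i = d (i - 1) * Real.exp (m (i - 1) - m i) + Real.exp (x i - m i)) :
    (∀ i, 1 ≤ i → i ≤ n →
        d i = ∑ j ∈ Finset.Icc 1 i, Real.exp (x j - m i)) ∧
      Real.log (d n) + m n = Real.log (∑ j ∈ Finset.Icc 1 n, Real.exp (x j)) :=
  online_softmax_correct_general n hn x m d hm1 hd1 hd
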